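/- Let G₁ and G₂ be disjoint graphs on n₁ and n₂ vertices respectively, and let G = G₁ + G₂ be their join. Then the characteristic polynomial of the Laplacian satisfies Θ(G₁+G₂, x) · (x - n₁)(x - n₂) = x(x - n₁ - n₂) · Θ(G₁, x - n₂) · Θ(G₂, x - n₁), where Θ(H, x) = det(xI - L(H)). -/

import Mathlib

/-
Ordering `V₁ ⊕ V₂` blockwise, `xI - L(G₁ + G₂)` is the block-diagonal matrix
`diag(xI - (L₁ + n₂I + J), xI - (L₂ + n₁I + J))` plus the all-ones matrix `J`. If every row of a
square matrix `Q` of size `n` sums to `c ≠ 0`, then `Q + tJ = Q (I + (t/c)·𝟙𝟙ᵀ)`, so the matrix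
determinant lemma gives `c · det(Q + tJ) = (c + t n) · det Q`. Since the Laplacians have zero row
sums, this identity (over the fraction field of `ℝ[X]`, where `c = x - const` is nonzero) relates
`Θ(G₁ + G₂, x)` to `det(xI - (L₁ + n₂I + J))` and these in turn to `Θ(Gᵢ, x - nⱼ)`; cancelling the
factor `x - n₁ - n₂` gives the formula.
-/

open Matrix Polynomial

/-- The join `G + H` of two disjoint graphs: all edges of `G` and `H`, together with all edges
between the two vertex sets. -/
def graphJoin {α β : Type*} (G : SimpleGraph α) (H : SimpleGraph β) : SimpleGraph (α ⊕ β) where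
  Adj u v := match u, v with
    | Sum.inl u, Sum.inl v => G.Adj u v
    | Sum.inr u, Sum.inr v => H.Adj u v
    | Sum.inl _, Sum.inr _ => True
    | Sum.inr _, Sum.inl _ => True
  symm := ⟨fun u v => match u, v with
    | Sum.inl _, Sum.inl _ => G.adj_symm
    | Sum.inr _, Sum.inr _ => H.adj_symm
    | Sum.inl _, Sum.inr _ => fun _ => trivial
    | Sum.inr _, Sum.inl _ => fun _ => trivial⟩
  loopless := ⟨fun u => match u with
    | Sum.inl _ => G.irrefl
    | Sum.inr _ => H.irrefl⟩

instance {α β : Type*} (G : SimpleGraph α) (H : SimpleGraph β)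
    [DecidableRel G.Adj] [DecidableRel H.Adj] : DecidableRel (graphJoin G H).Adj :=
  fun u v => match u, v with
    | Sum.inl u, Sum.inl v => inferInstanceAs (Decidable (G.Adj u v))
    | Sum.inr u, Sum.inr v => inferInstanceAs (Decidable (H.Adj u v))
    | Sum.inl _, Sum.inr _ => inferInstanceAs (Decidable True)
    | Sum.inr _, Sum.inl _ => inferInstanceAs (Decidable True)

namespace Matrix

section RowSums

variable {n R : Type*} [Fintype n] [CommRing R]

theorem add_const_mulVec_one {M : Matrix n n R} {μ : R} (hM : M *ᵥ (fun _ => 1) = fun _ => μ)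
    (t : R) : (M + of fun _ _ => t) *ᵥ (fun _ => 1) = fun _ => μ + t * Fintype.card n := by
  rw [add_mulVec, hM]
  ext i
  simp [mulVec, dotProduct, mul_comm]

theorem fromBlocks_zero_mulVec_one {m : Type*} [Fintype m] {A : Matrix m m R} {B : Matrix n n R}
    {μ : R} (hA : A *ᵥ (fun _ => 1) = fun _ => μ) (hB : B *ᵥ (fun _ => 1) = fun _ => μ) :
    fromBlocks A 0 0 B *ᵥ (fun _ => 1) = fun _ => μ := by
  ext (i | i)
  · simpa [fromBlocks_mulVec, Function.comp_def] using congrFun hA i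
  · simpa [fromBlocks_mulVec, Function.comp_def] using congrFun hB i

variable [DecidableEq n]

theorem add_scalar_mulVec_one {M : Matrix n n R} {μ : R} (hM : M *ᵥ (fun _ => 1) = fun _ => μ)
    (a : R) : (M + scalar n a) *ᵥ (fun _ => 1) = fun _ => μ + a := by
  rw [add_mulVec, hM]
  ext i
  simp

theorem charmatrix_mulVec_one {M : Matrix n n R} {μ : R} (hM : M *ᵥ (fun _ => 1) = fun _ => μ) :
    charmatrix M *ᵥ (fun _ => 1) = fun _ => X - C μ := by
  ext i
  rw [charmatrix, sub_mulVec, RingHom.mapMatrix_apply, Pi.sub_apply,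
    show (fun _ : n => (1 : R[X])) = C ∘ fun _ => 1 by ext; simp, ← RingHom.map_mulVec, hM]
  simp

end RowSums

variable {n : Type*} [Fintype n] [DecidableEq n]

theorem mul_det_add_const_of_mulVec_one {K : Type*} [Field K] {Q : Matrix n n K} {c : K}
    (hQ : Q *ᵥ (fun _ => 1) = fun _ => c) (hc : c ≠ 0) (t : K) :
    c * (Q + of fun _ _ => t).det = (c + t * Fintype.card n) * Q.det := by
  have hfactor : Q + of (fun _ _ => t) =
      Q * (1 + replicateCol Unit (fun _ : n => t / c) *
        replicateRow Unit (fun _ : n => (1 : K))) := by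
    have hQt : Q *ᵥ (fun _ => t / c) = fun _ => t := by
      rw [show (fun _ : n => t / c) = (t / c) • fun _ => (1 : K) by ext; simp, mulVec_smul, hQ]
      ext; simp [hc]
    rw [Matrix.mul_add, Matrix.mul_one, ← Matrix.mul_assoc, ← replicateCol_mulVec, hQt]
    ext i j; simp [Matrix.mul_apply]
  rw [hfactor, det_mul, det_one_add_replicateCol_mul_replicateRow]
  simp only [dotProduct, one_mul, Finset.sum_const, Finset.card_univ, nsmul_eq_mul]
  field_simp

section Charpoly

variable {R : Type*} [CommRing R]

theorem charmatrix_add_const (M : Matrix n n R) (t : R) :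
    charmatrix (M + of fun _ _ => t) = charmatrix M + of fun _ _ => -C t := by
  ext i j
  by_cases h : i = j <;> simp [h] <;> ring

theorem charpoly_add_scalar (M : Matrix n n R) (a : R) :
    (M + scalar n a).charpoly = M.charpoly.comp (X - C a) := by
  simpa [sub_eq_add_neg] using charpoly_sub_scalar M (-a)

theorem X_sub_C_mul_charpoly_add_const [IsDomain R] {M : Matrix n n R} {μ : R}
    (hM : M *ᵥ (fun _ => 1) = fun _ => μ) (t : R) :
    (X - C μ) * (M + of fun _ _ => t).charpoly = (X - C (μ + t * Fintype.card n)) * M.charpoly := by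
  let φ := algebraMap R[X] (FractionRing R[X])
  have hφ : Function.Injective φ := IsFractionRing.injective R[X] (FractionRing R[X])
  have hrow : (charmatrix M).map φ *ᵥ (fun _ => 1) = fun _ => φ (X - C μ) := by
    ext i
    rw [show (fun _ => (1 : FractionRing R[X])) = φ ∘ fun _ => 1 by ext; simp,
      ← RingHom.map_mulVec, charmatrix_mulVec_one hM]
  have hc : φ (X - C μ) ≠ 0 := (map_ne_zero_iff φ hφ).mpr (X_sub_C_ne_zero μ)
  have key := mul_det_add_const_of_mulVec_one hrow hc (φ (-C t))
  apply hφ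
  simp only [charpoly, map_mul, RingHom.map_det, RingHom.mapMatrix_apply, charmatrix_add_const]
  convert key using 2
  · congr 1
    ext
    simp
  · simp only [map_sub, map_add, map_mul, map_neg, map_natCast]
    ring

end Charpoly

def joinLaplacian {m R : Type*} [Fintype m] [DecidableEq m] [Ring R] (A : Matrix m m R)
    (B : Matrix n n R) : Matrix (m ⊕ n) (m ⊕ n) R :=
  fromBlocks (A + scalar m (Fintype.card n : R)) (of fun _ _ => -1) (of fun _ _ => -1)
    (B + scalar n (Fintype.card m : R))

theorem charpoly_joinLaplacian_mul {m R : Type*} [Fintype m] [DecidableEq m] [CommRing R]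
    [IsDomain R] {A : Matrix m m R} {B : Matrix n n R} (hA : A *ᵥ (fun _ => 1) = 0)
    (hB : B *ᵥ (fun _ => 1) = 0) :
    (joinLaplacian A B).charpoly *
        ((X - C (Fintype.card m : R)) * (X - C (Fintype.card n : R))) =
      X * (X - C ((Fintype.card m : R) + (Fintype.card n : R))) *
        (A.charpoly.comp (X - C (Fintype.card n : R))) *
        (B.charpoly.comp (X - C (Fintype.card m : R))) := by
  set a : R := (Fintype.card m : R) with ha
  set b : R := (Fintype.card n : R) with hb
  have hA_b := add_scalar_mulVec_one (μ := 0) hA b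
  have hB_a := add_scalar_mulVec_one (μ := 0) hB a
  have hsplit : joinLaplacian A B =
      fromBlocks (A + scalar m b + of fun _ _ => 1) 0 0 (B + scalar n a + of fun _ _ => 1) +
        of fun _ _ => -1 := by
    ext (i | i) (j | j) <;> simp [joinLaplacian] <;> rfl
  have hA_row : (A + scalar m b + of fun _ _ => 1) *ᵥ (fun _ => 1) = fun _ => a + b := by
    rw [add_const_mulVec_one hA_b]
    exact funext fun _ => by ring
  have hB_row : (B + scalar n a + of fun _ _ => 1) *ᵥ (fun _ => 1) = fun _ => a + b := by
    rw [add_const_mulVec_one hB_a]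
    exact funext fun _ => by ring
  have hjoin := X_sub_C_mul_charpoly_add_const (fromBlocks_zero_mulVec_one hA_row hB_row) (-1)
  have hleft := X_sub_C_mul_charpoly_add_const hA_b 1
  have hright := X_sub_C_mul_charpoly_add_const hB_a 1
  rw [← hsplit, charpoly_fromBlocks_zero₁₂] at hjoin
  rw [charpoly_add_scalar] at hleft hright
  simp only [Fintype.card_sum] at hjoin
  push_cast at hjoin hleft hright
  apply mul_left_cancel₀ (X_sub_C_ne_zero (a + b))
  simp only [← ha, ← hb, C_add, C_mul, C_neg, C_1, zero_add, one_mul] at hjoin hleft hright ⊢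
  linear_combination (X - C a) * (X - C b) * hjoin +
    X * (X - C a) * (B + scalar n a + of fun _ _ => 1).charpoly * hleft +
    X * (X - (C a + C b)) * A.charpoly.comp (X - C b) * hright

end Matrix

section graphJoin

variable {V₁ V₂ : Type*} (G₁ : SimpleGraph V₁) (G₂ : SimpleGraph V₂)

@[simp]
theorem graphJoin_adj_inl_inl {u v : V₁} :
    (graphJoin G₁ G₂).Adj (Sum.inl u) (Sum.inl v) ↔ G₁.Adj u v := Iff.rfl

@[simp]
theorem graphJoin_adj_inr_inr {u v : V₂} :
    (graphJoin G₁ G₂).Adj (Sum.inr u) (Sum.inr v) ↔ G₂.Adj u v := Iff.rfl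

@[simp]
theorem graphJoin_adj_inl_inr {u : V₁} {v : V₂} : (graphJoin G₁ G₂).Adj (Sum.inl u) (Sum.inr v) :=
  trivial

@[simp]
theorem graphJoin_adj_inr_inl {u : V₂} {v : V₁} : (graphJoin G₁ G₂).Adj (Sum.inr u) (Sum.inl v) :=
  trivial

variable [Fintype V₁] [Fintype V₂] [DecidableRel G₁.Adj] [DecidableRel G₂.Adj]

theorem neighborFinset_graphJoin_inl (v : V₁) :
    (graphJoin G₁ G₂).neighborFinset (Sum.inl v) = (G₁.neighborFinset v).disjSum Finset.univ := by
  ext (u | u) <;> simp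

theorem neighborFinset_graphJoin_inr (v : V₂) :
    (graphJoin G₁ G₂).neighborFinset (Sum.inr v) = Finset.univ.disjSum (G₂.neighborFinset v) := by
  ext (u | u) <;> simp

theorem degree_graphJoin_inl (v : V₁) :
    (graphJoin G₁ G₂).degree (Sum.inl v) = G₁.degree v + Fintype.card V₂ := by
  rw [← SimpleGraph.card_neighborFinset_eq_degree, neighborFinset_graphJoin_inl,
    Finset.card_disjSum, SimpleGraph.card_neighborFinset_eq_degree, Finset.card_univ]

theorem degree_graphJoin_inr (v : V₂) :
    (graphJoin G₁ G₂).degree (Sum.inr v) = Fintype.card V₁ + G₂.degree v := by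
  rw [← SimpleGraph.card_neighborFinset_eq_degree, neighborFinset_graphJoin_inr,
    Finset.card_disjSum, SimpleGraph.card_neighborFinset_eq_degree, Finset.card_univ]

theorem lapMatrix_graphJoin [DecidableEq V₁] [DecidableEq V₂] (R : Type*) [Ring R] :
    (graphJoin G₁ G₂).lapMatrix R = (G₁.lapMatrix R).joinLaplacian (G₂.lapMatrix R) := by
  ext (i | i) (j | j) <;>
    simp [Matrix.joinLaplacian, SimpleGraph.lapMatrix, SimpleGraph.degMatrix,
      SimpleGraph.adjMatrix_apply, Matrix.diagonal_apply, degree_graphJoin_inl,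
      degree_graphJoin_inr, Matrix.natCast_apply] <;>
    split_ifs <;> abel

end graphJoin

/-- Mohar's formula: for disjoint graphs `G₁`, `G₂` on `n₁`, `n₂` vertices, the characteristic
polynomial `Θ(H, x) = det(xI - L(H))` of the Laplacian of the join satisfies
`Θ(G₁+G₂, x)·(x-n₁)(x-n₂) = x(x-n₁-n₂)·Θ(G₁, x-n₂)·Θ(G₂, x-n₁)`. -/
theorem lap_charpoly_join {V₁ V₂ : Type*} [Fintype V₁] [Fintype V₂]
    [DecidableEq V₁] [DecidableEq V₂]
    (G₁ : SimpleGraph V₁) (G₂ : SimpleGraph V₂)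
    [DecidableRel G₁.Adj] [DecidableRel G₂.Adj] :
    ((graphJoin G₁ G₂).lapMatrix ℝ).charpoly *
        ((X - C (Fintype.card V₁ : ℝ)) * (X - C (Fintype.card V₂ : ℝ))) =
      X * (X - C ((Fintype.card V₁ : ℝ) + (Fintype.card V₂ : ℝ))) *
        ((G₁.lapMatrix ℝ).charpoly.comp (X - C (Fintype.card V₂ : ℝ))) *
        ((G₂.lapMatrix ℝ).charpoly.comp (X - C (Fintype.card V₁ : ℝ))) := by
  rw [lapMatrix_graphJoin]
  exact Matrix.charpoly_joinLaplacian_mul G₁.lapMatrix_mulVec_const_eq_zero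
    G₂.lapMatrix_mulVec_const_eq_zero
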